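/- Post-selection deviation bound: Let θ̄ minimize θ ↦ (1/(nh))|Y - G_S θ|₂² over ℝ^{|S|} (least squares on selected columns), and let θ̃ ∈ ℝ^{|S|} satisfy the KKT-type bound (2/(nh))|(Y - G_S θ̃)' G_S|_∞ ≤ λ. If the minimum eigenvalue μ of (1/(nh))G_S'G_S is positive, then |θ̄ - θ̃|₁ ≤ μ⁻¹ λ |S|. -/

import Mathlib

/-!
The normal equations `G_Sᵀ (Y - G_S θ̄) = 0` turn `δ = θ̄ - θ̃` into a solution of
`G_Sᵀ G_S δ = G_Sᵀ (Y - G_S θ̃)`, whose right-hand side has sup norm at most `n h λ / 2`.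
Hence `μ |δ|₂² ≤ δᵀ ((1/(nh)) G_Sᵀ G_S) δ ≤ (λ/2) |δ|₁` by the Rayleigh bound and Hölder, and
`|δ|₁² ≤ s |δ|₂²` turns this into `|δ|₁ ≤ μ⁻¹ λ s / 2`.
-/

noncomputable section
open Matrix BigOperators Finset

def l1 {d : ℕ} (v : Fin d → ℝ) : ℝ := ∑ j, |v j|

def sq2 {m : ℕ} (v : Fin m → ℝ) : ℝ := ∑ i, (v i) ^ 2

def linf {m : ℕ} (v : Fin m → ℝ) : ℝ := ⨆ i, |v i|

open scoped MatrixOrder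

lemma sq2_eq_dotProduct {m : ℕ} (v : Fin m → ℝ) : sq2 v = v ⬝ᵥ v := by
  simp only [sq2, dotProduct, sq]

lemma abs_le_linf {m : ℕ} (v : Fin m → ℝ) (i : Fin m) : |v i| ≤ linf v :=
  le_ciSup (f := fun i => |v i|) (Set.finite_range _).bddAbove i

lemma linf_nonneg {m : ℕ} (v : Fin m → ℝ) : 0 ≤ linf v :=
  Real.iSup_nonneg fun i => abs_nonneg (v i)

lemma l1_nonneg {d : ℕ} (v : Fin d → ℝ) : 0 ≤ l1 v :=
  Finset.sum_nonneg fun j _ => abs_nonneg (v j)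

lemma dotProduct_le_l1_mul_linf {m : ℕ} (u v : Fin m → ℝ) : u ⬝ᵥ v ≤ l1 u * linf v := by
  rw [dotProduct, l1, Finset.sum_mul]
  refine Finset.sum_le_sum fun i _ => ?_
  calc u i * v i ≤ |u i| * |v i| := by rw [← abs_mul]; exact le_abs_self _
    _ ≤ |u i| * linf v := by gcongr; exact abs_le_linf v i

lemma l1_sq_le_card_mul_sq2 {d : ℕ} (v : Fin d → ℝ) : l1 v ^ 2 ≤ d * sq2 v := by
  simpa [l1, sq2, sq_abs] using sq_sum_le_card_mul_sum_sq (s := Finset.univ) (f := fun j => |v j|)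

lemma l1_le_of_mul_sq2_le {d : ℕ} {v : Fin d → ℝ} {μ c : ℝ} (hμ : 0 < μ) (hc : 0 ≤ c)
    (h : μ * sq2 v ≤ c * l1 v) : l1 v ≤ μ⁻¹ * c * d := by
  have hsq : μ * l1 v ^ 2 ≤ d * c * l1 v := by
    nlinarith [l1_sq_le_card_mul_sq2 v, Nat.cast_nonneg (α := ℝ) d]
  rw [mul_assoc, le_inv_mul_iff₀ hμ]
  rcases (l1_nonneg v).eq_or_lt with h0 | hpos
  · rw [← h0, mul_zero]; positivity
  · nlinarith

lemma sq2_sub_smul {m : ℕ} (r w : Fin m → ℝ) (t : ℝ) :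
    sq2 (r - t • w) = (w ⬝ᵥ w) * (t * t) + (-2 * (r ⬝ᵥ w)) * t + r ⬝ᵥ r := by
  simp only [sq2_eq_dotProduct, sub_dotProduct, dotProduct_sub, smul_dotProduct, dotProduct_smul,
    smul_eq_mul, dotProduct_comm w r]
  ring

lemma transpose_mulVec_residual_eq_zero {m d : ℕ} {G : Matrix (Fin m) (Fin d) ℝ} {Y : Fin m → ℝ}
    {θ : Fin d → ℝ} (hθ : ∀ θ', sq2 (Y - G *ᵥ θ) ≤ sq2 (Y - G *ᵥ θ')) :
    Gᵀ *ᵥ (Y - G *ᵥ θ) = 0 := by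
  set r := Y - G *ᵥ θ
  set g := Gᵀ *ᵥ r
  have hquad : ∀ t : ℝ, 0 ≤ ((G *ᵥ g) ⬝ᵥ (G *ᵥ g)) * (t * t) + (-2 * (g ⬝ᵥ g)) * t + 0 := by
    intro t
    have key := hθ (θ + t • g)
    have hres : Y - G *ᵥ (θ + t • g) = r - t • (G *ᵥ g) := by
      rw [mulVec_add, mulVec_smul, sub_add_eq_sub_sub]
    have hrg : r ⬝ᵥ (G *ᵥ g) = g ⬝ᵥ g := by
      rw [dotProduct_mulVec, ← mulVec_transpose]
    rw [hres, sq2_sub_smul, hrg, sq2_eq_dotProduct] at key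
    linarith
  -- The residual sum of squares along `θ + t • g` is a quadratic in `t` with minimum at `t = 0`,
  -- so its discriminant `4 (g ⬝ᵥ g)²` is nonpositive.
  have hdisc := discrim_le_zero hquad
  rw [discrim] at hdisc
  exact dotProduct_self_eq_zero.mp (by nlinarith [sq_nonneg (g ⬝ᵥ g)])

lemma Matrix.IsHermitian.iInf_eigenvalues_mul_dotProduct_le {ι : Type*} [Fintype ι] [DecidableEq ι]
    {A : Matrix ι ι ℝ} (hA : A.IsHermitian) (x : ι → ℝ) :
    (⨅ i, hA.eigenvalues i) * (x ⬝ᵥ x) ≤ x ⬝ᵥ A *ᵥ x := by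
  have hle : algebraMap ℝ (Matrix ι ι ℝ) (⨅ i, hA.eigenvalues i) ≤ A := by
    rw [algebraMap_le_iff_le_spectrum (a := A) hA.isSelfAdjoint,
      hA.spectrum_real_eq_range_eigenvalues]
    rintro _ ⟨i, rfl⟩
    exact ciInf_le (Set.finite_range _).bddBelow i
  simpa [sub_mulVec, dotProduct_sub, Algebra.algebraMap_eq_smul_one, smul_mulVec, dotProduct_smul]
    using (Matrix.le_iff.mp hle).dotProduct_mulVec_nonneg x

theorem stmt6_general {n s : ℕ} (hn : 0 < n) (h : ℝ) (hh : 0 < h)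
    (lam : ℝ)
    (GS : Matrix (Fin n) (Fin s) ℝ) (Y : Fin n → ℝ)
    (θbar θtilde : Fin s → ℝ)
    (hmin : ∀ θ : Fin s → ℝ,
      (1 / (n * h)) * sq2 (Y - GS.mulVec θbar) ≤ (1 / (n * h)) * sq2 (Y - GS.mulVec θ))
    (hKKT : (2 / (n * h)) * linf (GSᵀ.mulVec (Y - GS.mulVec θtilde)) ≤ lam)
    (hHerm : ((1 / ((n : ℝ) * h)) • (GSᵀ * GS)).IsHermitian)
    (μ : ℝ) (hμdef : μ = ⨅ i, hHerm.eigenvalues i) (hμ : 0 < μ) :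
    l1 (θbar - θtilde) ≤ μ⁻¹ * lam * (s : ℝ) := by
  have hnh : (0 : ℝ) < n * h := by positivity
  set δ := θbar - θtilde
  set v := GSᵀ *ᵥ (Y - GS *ᵥ θtilde)
  have hnormal := transpose_mulVec_residual_eq_zero fun θ =>
    le_of_mul_le_mul_left (hmin θ) (one_div_pos.mpr hnh)
  have hgram : (GSᵀ * GS) *ᵥ δ = v := by
    have hδ : GS *ᵥ δ = (Y - GS *ᵥ θtilde) - (Y - GS *ᵥ θbar) := by
      rw [mulVec_sub]; abel
    rw [← mulVec_mulVec, hδ, mulVec_sub, hnormal, sub_zero]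
  have hlam : 0 ≤ lam := (mul_nonneg (by positivity) (linf_nonneg v)).trans hKKT
  have hquad : μ * sq2 δ ≤ lam / 2 * l1 δ := calc
    μ * sq2 δ ≤ δ ⬝ᵥ ((1 / ((n : ℝ) * h)) • (GSᵀ * GS)) *ᵥ δ := by
      rw [sq2_eq_dotProduct, hμdef]; exact hHerm.iInf_eigenvalues_mul_dotProduct_le δ
    _ = (1 / (n * h)) * (δ ⬝ᵥ v) := by rw [smul_mulVec, hgram, dotProduct_smul, smul_eq_mul]
    _ ≤ (1 / (n * h)) * (l1 δ * linf v) := by gcongr; exact dotProduct_le_l1_mul_linf δ v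
    _ = (2 / (n * h) * linf v) / 2 * l1 δ := by ring
    _ ≤ lam / 2 * l1 δ := by
      gcongr; exact l1_nonneg δ
  calc l1 δ ≤ μ⁻¹ * (lam / 2) * s := l1_le_of_mul_sq2_le hμ (by positivity) hquad
    _ ≤ μ⁻¹ * lam * s := by gcongr; linarith

theorem stmt6 {n s : ℕ} (hn : 0 < n) (hs : 0 < s) (h : ℝ) (hh : 0 < h)
    (lam : ℝ) (hlam : 0 ≤ lam)
    (GS : Matrix (Fin n) (Fin s) ℝ) (Y : Fin n → ℝ)
    (θbar θtilde : Fin s → ℝ)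
    (hmin : ∀ θ : Fin s → ℝ,
      (1 / (n * h)) * sq2 (Y - GS.mulVec θbar) ≤ (1 / (n * h)) * sq2 (Y - GS.mulVec θ))
    (hKKT : (2 / (n * h)) * linf (GSᵀ.mulVec (Y - GS.mulVec θtilde)) ≤ lam)
    (hHerm : ((1 / ((n : ℝ) * h)) • (GSᵀ * GS)).IsHermitian)
    (μ : ℝ) (hμdef : μ = ⨅ i, hHerm.eigenvalues i) (hμ : 0 < μ) :
    l1 (θbar - θtilde) ≤ μ⁻¹ * lam * (s : ℝ) :=
  stmt6_general hn h hh lam GS Y θbar θtilde hmin hKKT hHerm μ hμdef hμ
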